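/- Let R be a finite set of resources, V a type of nodes with visited-set semantics, and fix an arc (i,j) with resource consumptions t : R → ℝ and modified cost c̄ᵢⱼ ∈ ℝ; let w_lo, w_hi : R → ℝ be the lower and upper resource bounds at node j. Suppose two labels L1, L2 reside at the same node i with visited sets V1, V2 ⊆ V, reduced costs γ1, γ2 ∈ ℝ and resource values T1, T2 : R → ℝ, and L1 dominates L2: V2 ⊆ V1, γ1 ≤ γ2, and T1 r ≤ T2 r for all r ∈ R. Extend both labels along (i,j), obtaining visited sets Vk' = Vk ∪ {j}, reduced costs γk' = γk + c̄ᵢⱼ, and resource values Tk' r = max (w_lo r) (Tk r + t r). Then the extension of L1 again dominates the extension of L2: V2' ⊆ V1', γ1' ≤ γ2', and T1' r ≤ T2' r for all r ∈ R; moreover, resource-feasibility of the extension of L2 implies that of the extension of L1, i.e. if T2' r ≤ w_hi r for all r ∈ R then T1' r ≤ w_hi r for all r ∈ R. -/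
import Mathlib

/-- Invariance of label dominance under extension along an arc `(i,j)`:
if label `L1` dominates label `L2` at node `i`, then the extension of `L1`
along `(i,j)` dominates the extension of `L2`; moreover feasibility of the
extension of `L2` implies feasibility of the extension of `L1`. -/
theorem label_dominance_preserved_under_extension
    {R V : Type*} [Fintype R]
    (j : V) (t : R → ℝ) (cbar : ℝ) (w_lo w_hi : R → ℝ)
    (V1 V2 : Set V) (γ1 γ2 : ℝ) (T1 T2 : R → ℝ)
    (hV : V2 ⊆ V1) (hγ : γ1 ≤ γ2) (hT : ∀ r : R, T1 r ≤ T2 r) :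
    (V2 ∪ {j} ⊆ V1 ∪ {j}) ∧
    (γ1 + cbar ≤ γ2 + cbar) ∧
    (∀ r : R, max (w_lo r) (T1 r + t r) ≤ max (w_lo r) (T2 r + t r)) ∧
    ((∀ r : R, max (w_lo r) (T2 r + t r) ≤ w_hi r) →
      ∀ r : R, max (w_lo r) (T1 r + t r) ≤ w_hi r) := by
  refine ⟨Set.union_subset_union_left _ hV, by linarith,
    fun r => max_le_max le_rfl (by linarith [hT r]),
    fun h r => le_trans (max_le_max le_rfl (by linarith [hT r])) (h r)⟩
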